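/- Let m ≥ 1, g ≥ 2, γ ∈ ZMod m, and let W = W(m, g, γ) be the twist group defined in the context, acting on V = Fin g → ZMod m × ZMod m. Then for every x ∈ V there exist σ ∈ W and ξ ∈ ZMod m with ξ = 0 or ξ = 1 such that (σ x) 0 = (0, ξ) and (σ x) i = (1, 1) for all i ≠ 0. (This is the normalization statement of Lemma 5.4: every m-Arf function on a surface of genus g > 1 admits a standard basis on which its values on the handle generators are (0, ξ, 1, …, 1) with ξ ∈ {0,1}.) -/

import Mathlib

/-- Shear of the `β`-components of `x : Fin g → ZMod m × ZMod m` by an amount depending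
only on the `α`-components. -/
def shearB (m g : ℕ) (h : (Fin g → ZMod m) → Fin g → ZMod m) :
    Equiv.Perm (Fin g → ZMod m × ZMod m) where
  toFun x k := ((x k).1, (x k).2 + h (fun l => (x l).1) k)
  invFun x k := ((x k).1, (x k).2 - h (fun l => (x l).1) k)
  left_inv x := by funext k; simp
  right_inv x := by funext k; simp

/-- Shear of the `α`-components of `x : Fin g → ZMod m × ZMod m` by an amount depending
only on the `β`-components. -/
def shearA (m g : ℕ) (h : (Fin g → ZMod m) → Fin g → ZMod m) :
    Equiv.Perm (Fin g → ZMod m × ZMod m) where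
  toFun x k := ((x k).1 + h (fun l => (x l).2) k, (x k).2)
  invFun x k := ((x k).1 - h (fun l => (x l).2) k, (x k).2)
  left_inv x := by funext k; simp
  right_inv x := by funext k; simp

/-- Apply the permutation `e` of `ZMod m × ZMod m` at the single coordinate `i`. -/
def atC (m g : ℕ) (i : Fin g) (e : Equiv.Perm (ZMod m × ZMod m)) :
    Equiv.Perm (Fin g → ZMod m × ZMod m) :=
  Equiv.piCongrRight fun k => if k = i then e else Equiv.refl _

/-- `(α, β) ↦ (−α, −β)`. -/
def negPair (m : ℕ) : Equiv.Perm (ZMod m × ZMod m) where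
  toFun p := (-p.1, -p.2)
  invFun p := (-p.1, -p.2)
  left_inv := by rintro ⟨a, b⟩; simp
  right_inv := by rintro ⟨a, b⟩; simp

/-- `(α, β) ↦ (−β, α)`. -/
def rotPair (m : ℕ) : Equiv.Perm (ZMod m × ZMod m) where
  toFun p := (-p.2, p.1)
  invFun p := (p.2, -p.1)
  left_inv := by rintro ⟨a, b⟩; simp
  right_inv := by rintro ⟨a, b⟩; simp

/-- `(α, β) ↦ (−β, α − γ − 1)`. -/
def t3Pair (m : ℕ) (γ : ZMod m) : Equiv.Perm (ZMod m × ZMod m) where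
  toFun p := (-p.2, p.1 - γ - 1)
  invFun p := (p.2 + γ + 1, -p.1)
  left_inv := by rintro ⟨a, b⟩; simp [Prod.ext_iff]; ring
  right_inv := by rintro ⟨a, b⟩; simp [Prod.ext_iff]; ring

/-- Dehn twist action `T1a(i) : (αᵢ, βᵢ) ↦ (αᵢ+βᵢ, βᵢ)`. -/
def T1a (m g : ℕ) (i : Fin g) : Equiv.Perm (Fin g → ZMod m × ZMod m) :=
  shearA m g fun b k => if k = i then b i else 0

/-- Dehn twist action `T1b(i) : (αᵢ, βᵢ) ↦ (αᵢ, βᵢ+αᵢ)`. -/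
def T1b (m g : ℕ) (i : Fin g) : Equiv.Perm (Fin g → ZMod m × ZMod m) :=
  shearB m g fun a k => if k = i then a i else 0

/-- Dehn twist action `T2(i,j) : βᵢ ↦ βᵢ − αⱼ − 1, βⱼ ↦ βⱼ − αᵢ − 1`. -/
def T2 (m g : ℕ) (i j : Fin g) : Equiv.Perm (Fin g → ZMod m × ZMod m) :=
  shearB m g fun a k => if k = i then -a j - 1 else if k = j then -a i - 1 else 0

/-- Dehn twist action `T3` at the index `i`: `(αᵢ, βᵢ) ↦ (−βᵢ, αᵢ − γ − 1)`. -/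
def T3 (m g : ℕ) (i : Fin g) (γ : ZMod m) : Equiv.Perm (Fin g → ZMod m × ZMod m) :=
  atC m g i (t3Pair m γ)

/-- Dehn twist action `T4(i,j)`: interchange the pairs at positions `i` and `j`. -/
def T4 (m g : ℕ) (i j : Fin g) : Equiv.Perm (Fin g → ZMod m × ZMod m) :=
  Equiv.arrowCongr (Equiv.swap i j) (Equiv.refl _)

/-- Dehn twist action `T5a(i) : (αᵢ, βᵢ) ↦ (−αᵢ, −βᵢ)`. -/
def T5a (m g : ℕ) (i : Fin g) : Equiv.Perm (Fin g → ZMod m × ZMod m) :=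
  atC m g i (negPair m)

/-- Dehn twist action `T5b(i) : (αᵢ, βᵢ) ↦ (−βᵢ, αᵢ)`. -/
def T5b (m g : ℕ) (i : Fin g) : Equiv.Perm (Fin g → ZMod m × ZMod m) :=
  atC m g i (rotPair m)

/-- The generators of the twist group: `T1a(i)`, `T1b(i)`, `T2(i,j)` for `i ≠ j`, `T3` at
the last index, `T4(i,j)` for `i ≠ j`, `T5a(i)`, `T5b(i)`. -/
def twistGens (m g : ℕ) (hg : 0 < g) (γ : ZMod m) :
    Set (Equiv.Perm (Fin g → ZMod m × ZMod m)) :=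
  (Set.range fun i => T1a m g i) ∪ (Set.range fun i => T1b m g i) ∪
    {σ | ∃ i j : Fin g, i ≠ j ∧ σ = T2 m g i j} ∪
    {T3 m g ⟨g - 1, Nat.sub_lt hg Nat.one_pos⟩ γ} ∪
    {σ | ∃ i j : Fin g, i ≠ j ∧ σ = T4 m g i j} ∪
    (Set.range fun i => T5a m g i) ∪ (Set.range fun i => T5b m g i)

/-- The twist group `W(m, g, γ)`: the subgroup of `Equiv.Perm (Fin g → ZMod m × ZMod m)`
generated by the Dehn twist actions. -/
def twistGroup (m g : ℕ) (hg : 0 < g) (γ : ZMod m) :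
    Subgroup (Equiv.Perm (Fin g → ZMod m × ZMod m)) :=
  Subgroup.closure (twistGens m g hg γ)

/-!
Locally at one handle, `T1a`, `T1b` and `T5b` act on `(α, β)` through `SL₂(ℤ)`, so the
Euclidean algorithm brings any pair to `(d, 0)`. Once the first handle has `α = 0`, the move
`T2(i, 0)` turns `(d, 0)` at handle `i` into `(d, -1)`, which is equivalent to `(1, 1)`, and
only alters `β` at the first handle. Finally, with `(1, 1)` on the second handle, `T2(0, 1)`
followed by `T1b(1)` lowers `β` at the first handle by `2`; reducing it modulo `2` gives `ξ`.
-/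

section

open Function

variable {m g : ℕ}

lemma atC_apply (i : Fin g) (e : Equiv.Perm (ZMod m × ZMod m)) (x : Fin g → ZMod m × ZMod m) :
    atC m g i e x = update x i (e (x i)) := by
  funext k
  rcases eq_or_ne k i with rfl | hk
  · simp [atC]
  · simp [atC, hk]

lemma T1a_apply (i : Fin g) (x : Fin g → ZMod m × ZMod m) :
    T1a m g i x = update x i ((x i).1 + (x i).2, (x i).2) := by
  funext k
  rcases eq_or_ne k i with rfl | hk
  · simp [T1a, shearA]
  · simp [T1a, shearA, hk]

lemma T1b_apply (i : Fin g) (x : Fin g → ZMod m × ZMod m) :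
    T1b m g i x = update x i ((x i).1, (x i).2 + (x i).1) := by
  funext k
  rcases eq_or_ne k i with rfl | hk
  · simp [T1b, shearB]
  · simp [T1b, shearB, hk]

lemma T5b_apply (i : Fin g) (x : Fin g → ZMod m × ZMod m) :
    T5b m g i x = update x i (-(x i).2, (x i).1) :=
  atC_apply i _ x

lemma T2_apply {i j : Fin g} (hij : i ≠ j) (x : Fin g → ZMod m × ZMod m) :
    T2 m g i j x =
      update (update x i ((x i).1, (x i).2 - (x j).1 - 1)) j ((x j).1, (x j).2 - (x i).1 - 1) := by
  funext k
  rcases eq_or_ne k j with rfl | hkj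
  · simp [T2, shearB, hij.symm, sub_eq_add_neg, add_assoc]
  rcases eq_or_ne k i with rfl | hki
  · simp [T2, shearB, hkj, sub_eq_add_neg, add_assoc]
  · simp [T2, shearB, hki, hkj]

section Membership

variable {hg : 0 < g} {γ : ZMod m}

lemma T1a_mem_twistGroup (i : Fin g) : T1a m g i ∈ twistGroup m g hg γ :=
  Subgroup.subset_closure <| by simp [twistGens]

lemma T1b_mem_twistGroup (i : Fin g) : T1b m g i ∈ twistGroup m g hg γ :=
  Subgroup.subset_closure <| by simp [twistGens]

lemma T2_mem_twistGroup {i j : Fin g} (hij : i ≠ j) : T2 m g i j ∈ twistGroup m g hg γ :=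
  Subgroup.subset_closure <|
    Or.inl <| Or.inl <| Or.inl <| Or.inl <| Or.inr ⟨i, j, hij, rfl⟩

lemma T5b_mem_twistGroup (i : Fin g) : T5b m g i ∈ twistGroup m g hg γ :=
  Subgroup.subset_closure <| by simp [twistGens]

end Membership

variable (hg : 0 < g) (γ : ZMod m)

def TwistReach (x y : Fin g → ZMod m × ZMod m) : Prop :=
  ∃ σ ∈ twistGroup m g hg γ, σ x = y

namespace TwistReach

variable {hg γ} {x y z : Fin g → ZMod m × ZMod m}

lemma refl (x : Fin g → ZMod m × ZMod m) : TwistReach hg γ x x :=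
  ⟨1, one_mem _, rfl⟩

lemma of_mem {σ : Equiv.Perm (Fin g → ZMod m × ZMod m)} (hσ : σ ∈ twistGroup m g hg γ)
    (x : Fin g → ZMod m × ZMod m) : TwistReach hg γ x (σ x) :=
  ⟨σ, hσ, rfl⟩

lemma symm : TwistReach hg γ x y → TwistReach hg γ y x := by
  rintro ⟨σ, hσ, rfl⟩
  exact ⟨σ⁻¹, inv_mem hσ, σ.symm_apply_apply x⟩

lemma trans : TwistReach hg γ x y → TwistReach hg γ y z → TwistReach hg γ x z := by
  rintro ⟨σ, hσ, rfl⟩ ⟨τ, hτ, rfl⟩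
  exact ⟨τ * σ, mul_mem hτ hσ, rfl⟩

end TwistReach

def PairReach (i : Fin g) (p q : ZMod m × ZMod m) : Prop :=
  ∀ x : Fin g → ZMod m × ZMod m, x i = p → TwistReach hg γ x (update x i q)

namespace PairReach

variable {hg γ} {i : Fin g} {p q r : ZMod m × ZMod m}

lemma refl (p : ZMod m × ZMod m) : PairReach hg γ i p p := fun x hx => by
  rw [← hx, update_eq_self]
  exact TwistReach.refl x

lemma symm (h : PairReach hg γ i p q) : PairReach hg γ i q p := fun x hx => by
  have := h (update x i p) (update_self ..)
  rw [update_idem, ← hx, update_eq_self] at this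
  exact this.symm

lemma trans (h₁ : PairReach hg γ i p q) (h₂ : PairReach hg γ i q r) : PairReach hg γ i p r :=
  fun x hx => by
    have := h₂ (update x i q) (update_self ..)
    rw [update_idem] at this
    exact (h₁ x hx).trans this

lemma of_apply {σ : Equiv.Perm (Fin g → ZMod m × ZMod m)} (hσ : σ ∈ twistGroup m g hg γ)
    {f : ZMod m × ZMod m → ZMod m × ZMod m} (hf : ∀ x, σ x = update x i (f (x i)))
    (p : ZMod m × ZMod m) : PairReach hg γ i p (f p) := fun x hx => by
  rw [← hx, ← hf]
  exact TwistReach.of_mem hσ x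

lemma add_snd (a b : ZMod m) : PairReach hg γ i (a, b) (a + b, b) :=
  of_apply (f := fun p => (p.1 + p.2, p.2)) (T1a_mem_twistGroup i) (T1a_apply i) (a, b)

lemma add_fst (a b : ZMod m) : PairReach hg γ i (a, b) (a, b + a) :=
  of_apply (f := fun p => (p.1, p.2 + p.1)) (T1b_mem_twistGroup i) (T1b_apply i) (a, b)

lemma rotate (a b : ZMod m) : PairReach hg γ i (a, b) (-b, a) :=
  of_apply (f := fun p => (-p.2, p.1)) (T5b_mem_twistGroup i) (T5b_apply i) (a, b)

lemma add_intCast_mul_snd (a b : ZMod m) (k : ℤ) :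
    PairReach hg γ i (a, b) (a + k * b, b) := by
  induction k using Int.induction_on with
  | zero => simpa using refl (a, b)
  | succ k ih =>
    convert ih.trans (add_snd _ _) using 2
    push_cast
    ring
  | pred k ih =>
    refine ih.trans (PairReach.symm ?_)
    convert add_snd (i := i) (a + ((-k - 1 : ℤ) : ZMod m) * b) b using 2
    push_cast
    ring

lemma add_mul_snd (a b c : ZMod m) : PairReach hg γ i (a, b) (a + c * b, b) := by
  obtain ⟨k, rfl⟩ := ZMod.intCast_surjective c
  exact add_intCast_mul_snd a b k

lemma exists_snd_eq_zero_of_intCast (a b : ℤ) :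
    ∃ d, PairReach hg γ i ((a : ZMod m), (b : ZMod m)) (d, 0) := by
  rcases eq_or_ne b 0 with rfl | hb
  · exact ⟨a, by simpa using refl _⟩
  obtain ⟨d, hd⟩ := exists_snd_eq_zero_of_intCast (-b) (a % b)
  refine ⟨d, .trans ?_ (.trans (rotate _ _) (by simpa using hd))⟩
  convert add_mul_snd (i := i) (a : ZMod m) b (-(a / b : ℤ)) using 2
  push_cast [Int.emod_def]
  ring
termination_by b.natAbs
decreasing_by
  have := Int.emod_lt a hb
  have := Int.emod_nonneg a hb
  omega

lemma exists_snd_eq_zero (p : ZMod m × ZMod m) : ∃ d, PairReach hg γ i p (d, 0) := by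
  obtain ⟨a, ha⟩ := ZMod.intCast_surjective p.1
  obtain ⟨b, hb⟩ := ZMod.intCast_surjective p.2
  rw [← Prod.mk.eta (p := p), ← ha, ← hb]
  exact exists_snd_eq_zero_of_intCast a b

lemma exists_fst_eq_zero (p : ZMod m × ZMod m) : ∃ d, PairReach hg γ i p (0, d) := by
  obtain ⟨d, hd⟩ := exists_snd_eq_zero (i := i) p
  exact ⟨d, hd.trans (by simpa using rotate d 0)⟩

lemma to_one_one (c : ZMod m) : PairReach hg γ i (c, -1) (1, 1) := by
  have h₁ : PairReach hg γ i (c, -1) (0, -1) := by simpa using add_mul_snd c (-1) c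
  have h₂ : PairReach hg γ i (0, -1) (1, 0) := by simpa using rotate (0 : ZMod m) (-1)
  have h₃ : PairReach hg γ i (1, 0) (1, 1) := by simpa using add_fst (1 : ZMod m) 0
  exact h₁.trans (h₂.trans h₃)

end PairReach

namespace TwistReach

variable {hg γ} {i j : Fin g}

lemma exists_update_one_one (hij : i ≠ j) (x : Fin g → ZMod m × ZMod m) (hj : (x j).1 = 0) :
    ∃ b, TwistReach hg γ x (update (update x j (0, b)) i (1, 1)) := by
  obtain ⟨d, hd⟩ := PairReach.exists_snd_eq_zero (hg := hg) (γ := γ) (i := i) (x i)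
  have hT2 : TwistReach hg γ (update x i (d, 0))
      (update (update x j (0, (x j).2 - d - 1)) i (d, -1)) := by
    convert of_mem (T2_mem_twistGroup hij) (update x i (d, 0)) using 1
    rw [T2_apply hij, update_comm hij]
    simp [update_of_ne hij.symm, hj, update_comm hij]
  have hone := PairReach.to_one_one (hg := hg) (γ := γ) d _ (update_self i (d, -1)
    (update x j (0, (x j).2 - d - 1)))
  rw [update_idem] at hone
  exact ⟨_, (hd x rfl).trans (hT2.trans hone)⟩

lemma update_sub_two (hij : i ≠ j) {x : Fin g → ZMod m × ZMod m} {c : ZMod m}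
    (hi : x i = (0, c)) (hj : x j = (1, 1)) : TwistReach hg γ x (update x i (0, c - 2)) := by
  convert (of_mem (T2_mem_twistGroup hij) x).trans (of_mem (T1b_mem_twistGroup j) _) using 1
  rw [T1b_apply, T2_apply hij, hi, hj]
  simp only [update_self, sub_zero, sub_self, zero_add, update_idem]
  rw [sub_sub, one_add_one_eq_two, eq_comm, update_eq_self_iff, update_of_ne hij.symm, hj]

lemma update_add_two (hij : i ≠ j) {x : Fin g → ZMod m × ZMod m} {c : ZMod m}
    (hi : x i = (0, c)) (hj : x j = (1, 1)) : TwistReach hg γ x (update x i (0, c + 2)) := by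
  have h := update_sub_two (hg := hg) (γ := γ) hij (x := update x i (0, c + 2))
    (update_self ..) (by rwa [update_of_ne hij.symm])
  rw [update_idem, add_sub_cancel_right, ← hi, update_eq_self] at h
  exact h.symm

lemma update_sub_two_mul (hij : i ≠ j) {x : Fin g → ZMod m × ZMod m} {c : ZMod m}
    (hi : x i = (0, c)) (hj : x j = (1, 1)) (k : ℤ) :
    TwistReach hg γ x (update x i (0, c - 2 * k)) := by
  have hj' (c' : ZMod m) : update x i (0, c') j = (1, 1) := by rwa [update_of_ne hij.symm]
  induction k using Int.induction_on with
  | zero => simpa [← hi] using refl x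
  | succ k ih =>
    convert ih.trans (update_sub_two hij (update_self ..) (hj' _)) using 1
    rw [update_idem]
    push_cast
    ring_nf
  | pred k ih =>
    convert ih.trans (update_add_two hij (update_self ..) (hj' _)) using 1
    rw [update_idem]
    push_cast
    ring_nf

lemma exists_update_zero_or_one (hij : i ≠ j) {x : Fin g → ZMod m × ZMod m}
    (hi : (x i).1 = 0) (hj : x j = (1, 1)) :
    ∃ ξ : ZMod m, (ξ = 0 ∨ ξ = 1) ∧ TwistReach hg γ x (update x i (0, ξ)) := by
  obtain ⟨n, hn⟩ := ZMod.intCast_surjective (x i).2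
  have hxi : x i = (0, (n : ZMod m)) := Prod.ext hi hn.symm
  refine ⟨((n % 2 : ℤ) : ZMod m), ?_, ?_⟩
  · rcases Int.emod_two_eq n with h | h <;> simp [h]
  · convert update_sub_two_mul hij hxi hj (n / 2) using 3
    push_cast [Int.emod_def]
    ring

variable (hg γ) in
lemma exists_one_one_of_ne (i : Fin g) (x : Fin g → ZMod m × ZMod m) :
    ∃ y, TwistReach hg γ x y ∧ (y i).1 = 0 ∧ ∀ j ≠ i, y j = (1, 1) := by
  obtain ⟨d, hd⟩ := PairReach.exists_fst_eq_zero (hg := hg) (γ := γ) (i := i) (x i)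
  suffices ∀ s : Finset (Fin g),
      ∃ y, TwistReach hg γ x y ∧ (y i).1 = 0 ∧ ∀ j ∈ s, j ≠ i → y j = (1, 1) by
    obtain ⟨y, hxy, hyi, hy⟩ := this Finset.univ
    exact ⟨y, hxy, hyi, fun j => hy j (Finset.mem_univ j)⟩
  intro s
  induction s using Finset.induction_on with
  | empty => exact ⟨_, hd x rfl, by simp, by simp⟩
  | insert a s _ ih =>
    obtain ⟨y, hxy, hyi, hys⟩ := ih
    rcases eq_or_ne a i with rfl | hai
    · exact ⟨y, hxy, hyi, fun j hj hja => hys j ((Finset.mem_insert.mp hj).resolve_left hja) hja⟩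
    obtain ⟨b, hb⟩ := exists_update_one_one hai y hyi
    refine ⟨_, hxy.trans hb, by simp [update_of_ne hai.symm], fun j hj hji => ?_⟩
    rcases eq_or_ne j a with rfl | hja
    · exact update_self ..
    · rw [update_of_ne hja, update_of_ne hji]
      exact hys j ((Finset.mem_insert.mp hj).resolve_left hja) hji

end TwistReach

end

/-- Lemma 5.4 (normalization): for `g > 1`, every tuple of values of an `m`-Arf function on
the handle generators can be transformed by the twist group into `(0, ξ, 1, …, 1)` with
`ξ ∈ {0, 1}`. -/
theorem twist_normalization (m g : ℕ) (hg : 2 ≤ g) (γ : ZMod m)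
    (x : Fin g → ZMod m × ZMod m) :
    ∃ σ ∈ twistGroup m g (by omega) γ, ∃ ξ : ZMod m, (ξ = 0 ∨ ξ = 1) ∧
      (σ x) ⟨0, by omega⟩ = (0, ξ) ∧
      ∀ i : Fin g, i ≠ ⟨0, by omega⟩ → (σ x) i = (1, 1) := by
  have h10 : (⟨1, by omega⟩ : Fin g) ≠ ⟨0, by omega⟩ := by simp
  obtain ⟨y, hxy, hy0, hy⟩ := TwistReach.exists_one_one_of_ne (by omega) γ ⟨0, by omega⟩ x
  obtain ⟨ξ, hξ, hyz⟩ := TwistReach.exists_update_zero_or_one h10.symm hy0 (hy _ h10)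
  obtain ⟨σ, hσ, hσx⟩ := hxy.trans hyz
  refine ⟨σ, hσ, ξ, hξ, by rw [hσx, Function.update_self], fun j hj => ?_⟩
  rw [hσx, Function.update_of_ne hj, hy j hj]
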